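/- arXiv:2605.05046 — 2 statements merged into one kernel-verified Lean document; each statement's English description precedes it below -/
import Mathlib

section
/- (Path coupling lemma.) Consider a Markov chain on a finite state space Ω ⊆ S^N for a finite color set S and coordinate set N. Say σ ∼ ξ if σ and ξ differ in exactly one coordinate. Let D be a positive integer and let Φ : Ω × Ω → {0,1,…,D} be such that Φ(σ,ξ) ≥ 1 whenever σ ≠ ξ, and such that for all σ,ξ ∈ Ω, Φ(σ,ξ) equals the minimum, over all simple paths η = (η₀,…,η_ℓ) in Ω with η₀ = σ, η_ℓ = ξ and η_i ∼ η_{i+1} for all i, of Σ_{i=0}^{ℓ−1} Φ(η_i,η_{i+1}). Suppose the graph (Ω, ∼) is connected, and suppose there exists β < 1 and, for every pair of states X ∼ Y, a coupling of the one-step transition distributions from X and from Y under which E[Φ(X′,Y′)] ≤ β·Φ(X,Y). Then there is an absolute constant c such that T_mix(ε) ≤ c · log(D/ε)/(1−β) for every ε ∈ (0,1). -/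
open Classical

noncomputable section

/-- The vertex set of the graph `Ĝ`: the edges of `G₁ ∪ G₂`. -/
abbrev HatVertex {V : Type} (G₁ G₂ : SimpleGraph V) : Type :=
  {e : Sym2 V // e ∈ G₁.edgeSet ∪ G₂.edgeSet}

/-- The graph `Ĝ`: the union of the line graphs of `G₁` and `G₂`, identifying vertices
corresponding to edges appearing in both graphs.  Two distinct edges are adjacent iff they
share an endpoint and both lie in `E₁` or both lie in `E₂`. -/
def hatG {V : Type} (G₁ G₂ : SimpleGraph V) : SimpleGraph (HatVertex G₁ G₂) where
  Adj e f := e ≠ f ∧ (∃ x : V, x ∈ e.1 ∧ x ∈ f.1) ∧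
    ((e.1 ∈ G₁.edgeSet ∧ f.1 ∈ G₁.edgeSet) ∨ (e.1 ∈ G₂.edgeSet ∧ f.1 ∈ G₂.edgeSet))
  symm := by
    constructor
    rintro e f ⟨h1, ⟨x, hx1, hx2⟩, h3⟩
    exact ⟨h1.symm, ⟨x, hx2, hx1⟩, by tauto⟩
  loopless := by
    constructor
    rintro e ⟨h1, -, -⟩
    exact h1 rfl

instance {V : Type} [Fintype V] (G₁ G₂ : SimpleGraph V) : Fintype (HatVertex G₁ G₂) :=
  Fintype.ofFinite _

/-- The weight of a vertex of `Ĝ`: `2` if the corresponding edge lies in both graphs,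
`1` otherwise. -/
def hatWeight {V : Type} (G₁ G₂ : SimpleGraph V) (e : HatVertex G₁ G₂) : ℕ :=
  if e.1 ∈ G₁.edgeSet ∧ e.1 ∈ G₂.edgeSet then 2 else 1

/-- A proper vertex coloring of a graph. -/
def IsProperVertexColoring {α β : Type} (H : SimpleGraph α) (σ : α → β) : Prop :=
  ∀ u w, H.Adj u w → σ u ≠ σ w

/-- A simultaneous edge `k`-coloring of the pair `(G₁, G₂)`. -/
def IsSimultaneousEdgeColoring {V : Type} (G₁ G₂ : SimpleGraph V) {k : ℕ}
    (φ : HatVertex G₁ G₂ → Fin k) : Prop :=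
  (∀ e f : HatVertex G₁ G₂, e.1 ∈ G₁.edgeSet → f.1 ∈ G₁.edgeSet → e ≠ f →
      (∃ x : V, x ∈ e.1 ∧ x ∈ f.1) → φ e ≠ φ f) ∧
  (∀ e f : HatVertex G₁ G₂, e.1 ∈ G₂.edgeSet → f.1 ∈ G₂.edgeSet → e ≠ f →
      (∃ x : V, x ∈ e.1 ∧ x ∈ f.1) → φ e ≠ φ f)

/-- The weighted Hamming distance `Ĥ`. -/
def hatH {V : Type} [Fintype V] (G₁ G₂ : SimpleGraph V) {k : ℕ}
    (σ τ : HatVertex G₁ G₂ → Fin k) : ℝ :=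
  ∑ v : HatVertex G₁ G₂, if σ v ≠ τ v then (hatWeight G₁ G₂ v : ℝ) else 0

/-- One step of a Markov chain applied to a distribution. -/
def stepDist {Ω : Type} [Fintype Ω] (P : Ω → Ω → ℝ) (μ : Ω → ℝ) : Ω → ℝ :=
  fun τ => ∑ σ, μ σ * P σ τ

/-- Total variation distance between two distributions on a finite state space. -/
def tvDist {Ω : Type} [Fintype Ω] (μ ν : Ω → ℝ) : ℝ :=
  (∑ x, |μ x - ν x|) / 2

/-- The point mass at a state. -/
def deltaDist {Ω : Type} (x : Ω) : Ω → ℝ :=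
  fun y => if y = x then 1 else 0

/-- A coupling of two distributions on a finite set. -/
def IsCoupling {Ω : Type} [Fintype Ω] (γ : Ω × Ω → ℝ) (μ ν : Ω → ℝ) : Prop :=
  (∀ q, 0 ≤ γ q) ∧ (∀ a, ∑ b, γ (a, b) = μ a) ∧ (∀ b, ∑ a, γ (a, b) = ν b)

/-- The result of a Glauber update at `(v, c)`: recolor `v` with `c` provided no
`Ĝ`-neighbor of `v` has color `c`. -/
def glauberStep {V : Type} (G₁ G₂ : SimpleGraph V) {k : ℕ}
    (σ : HatVertex G₁ G₂ → Fin k) (v : HatVertex G₁ G₂) (c : Fin k) :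
    HatVertex G₁ G₂ → Fin k :=
  if ∀ w, (hatG G₁ G₂).Adj v w → σ w ≠ c then Function.update σ v c else σ

/-- The transition matrix of the Glauber dynamics on `{1,…,k}^{V̂}`. -/
def glauberP {V : Type} [Fintype V] (G₁ G₂ : SimpleGraph V) (k : ℕ)
    (σ τ : HatVertex G₁ G₂ → Fin k) : ℝ :=
  (∑ v : HatVertex G₁ G₂, ∑ c : Fin k,
      if glauberStep G₁ G₂ σ v c = τ then (1 : ℝ) else 0) /
    ((Fintype.card (HatVertex G₁ G₂) : ℝ) * (k : ℝ))

/-- The uniform distribution over the proper vertex `k`-colorings of `Ĝ`,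
viewed as a distribution on all of `{1,…,k}^{V̂}`. -/
def uniformProper {V : Type} [Fintype V] (G₁ G₂ : SimpleGraph V) (k : ℕ) :
    (HatVertex G₁ G₂ → Fin k) → ℝ :=
  fun σ => if IsProperVertexColoring (hatG G₁ G₂) σ then
      (1 : ℝ) / (Nat.card {τ : HatVertex G₁ G₂ → Fin k //
        IsProperVertexColoring (hatG G₁ G₂) τ} : ℝ)
    else 0

/-- The graph of `(σ(v), c)`-alternating steps. -/
def clusterGraph {α β : Type} (H : SimpleGraph α) (σ : α → β) (v : α) (c : β) :
    SimpleGraph α where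
  Adj w w' := H.Adj w w' ∧ ((σ w = σ v ∧ σ w' = c) ∨ (σ w = c ∧ σ w' = σ v))
  symm := by
    constructor
    rintro w w' ⟨h1, h2⟩
    exact ⟨h1.symm, by tauto⟩
  loopless := by
    constructor
    rintro w ⟨h1, -⟩
    exact H.loopless.irrefl w h1

/-- The cluster `S_σ(v,c)`: the set of vertices reachable from `v` by a
`(σ(v), c)`-alternating path, with `S_σ(v, σ(v)) = {v}`. -/
def cluster {α β : Type} (H : SimpleGraph α) (σ : α → β) (v : α) (c : β) : Set α :=
  if c = σ v then {v} else {w | (clusterGraph H σ v c).Reachable v w}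

/-- The coloring obtained by interchanging the colors `σ(v)` and `c` on the cluster
`S_σ(v,c)`. -/
def flipColoring {α β : Type} (H : SimpleGraph α) (σ : α → β) (v : α) (c : β) : α → β :=
  fun w => if w ∈ cluster H σ v c then
      if σ w = σ v then c else if σ w = c then σ v else σ w
    else σ w

/-- The transition matrix of the flip dynamics with flip parameters `p`. -/
def flipP {α : Type} [Fintype α] (H : SimpleGraph α) (k : ℕ) (p : ℕ → ℝ)
    (σ τ : α → Fin k) : ℝ :=
  (∑ v : α, ∑ c : Fin k,
      ((p (Nat.card (cluster H σ v c)) / (Nat.card (cluster H σ v c) : ℝ)) *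
          (if flipColoring H σ v c = τ then (1 : ℝ) else 0) +
        (1 - p (Nat.card (cluster H σ v c)) / (Nat.card (cluster H σ v c) : ℝ)) *
          (if σ = τ then (1 : ℝ) else 0))) /
    ((Fintype.card α : ℝ) * (k : ℝ))

/-- The explicit flip parameters `P₁ = 1, P₂ = 137/650, P₃ = 77/650, P₄ = 47/650,
P₅ = 27/650, P₆ = 12/650`, and `P_i = 0` for `i ≥ 7`. -/
def flipParams : ℕ → ℝ := fun i =>
  if i = 1 then 1
  else if i = 2 then 137 / 650
  else if i = 3 then 77 / 650
  else if i = 4 then 47 / 650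
  else if i = 5 then 27 / 650
  else if i = 6 then 12 / 650
  else 0

/-- The set of (not necessarily proper) `L`-colorings. -/
def ListColorings {α : Type} (L : α → Finset ℕ) : Type :=
  {f : α → ℕ // ∀ v, f v ∈ L v}

instance {α : Type} [Finite α] (L : α → Finset ℕ) : Finite (ListColorings L) :=
  Finite.of_injective
    (fun f => (fun v => (⟨f.1 v, f.2 v⟩ : {c : ℕ // c ∈ L v})))
    (by
      intro f g h
      apply Subtype.ext
      funext v
      exact congrArg Subtype.val (congrFun h v))

instance {α : Type} [Fintype α] (L : α → Finset ℕ) : Fintype (ListColorings L) :=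
  Fintype.ofFinite _

/-- The `i`-th smallest element of a finite set of natural numbers (0-indexed). -/
def nthColor (L : Finset ℕ) (i : ℕ) : ℕ :=
  (L.sort (· ≤ ·)).getD i 0

/-- A cluster is flippable if both of its colors belong to the list of every vertex in it. -/
def ListFlippable {α : Type} (H : SimpleGraph α) (L : α → Finset ℕ) (σ : α → ℕ)
    (v : α) (c : ℕ) : Prop :=
  ∀ w ∈ cluster H σ v c, σ v ∈ L w ∧ c ∈ L w

/-- The transition matrix of the flip dynamics for `L`-list colorings. -/
def listFlipP {α : Type} [Fintype α] (H : SimpleGraph α) (L : α → Finset ℕ) (k : ℕ)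
    (p : ℕ → ℝ) (σ τ : ListColorings L) : ℝ :=
  (∑ v : α, ∑ i : Fin k,
      ((if ListFlippable H L σ.1 v (nthColor (L v) i) then
          p (Nat.card (cluster H σ.1 v (nthColor (L v) i))) /
            (Nat.card (cluster H σ.1 v (nthColor (L v) i)) : ℝ)
        else 0) *
          (if flipColoring H σ.1 v (nthColor (L v) i) = τ.1 then (1 : ℝ) else 0) +
        (1 - (if ListFlippable H L σ.1 v (nthColor (L v) i) then
          p (Nat.card (cluster H σ.1 v (nthColor (L v) i))) /
            (Nat.card (cluster H σ.1 v (nthColor (L v) i)) : ℝ)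
        else 0)) *
          (if σ = τ then (1 : ℝ) else 0))) /
    ((Fintype.card α : ℝ) * (k : ℝ))

/-- The uniform distribution over the proper `L`-colorings. -/
def uniformProperList {α : Type} [Fintype α] (H : SimpleGraph α) (L : α → Finset ℕ) :
    ListColorings L → ℝ :=
  fun σ => if IsProperVertexColoring H σ.1 then
      (1 : ℝ) / (Nat.card {τ : ListColorings L // IsProperVertexColoring H τ.1} : ℝ)
    else 0

/-- Two states differ in exactly one coordinate. -/
def AdjOne {N S : Type} (σ ξ : N → S) : Prop :=
  ∃ i, σ i ≠ ξ i ∧ ∀ j, j ≠ i → σ j = ξ j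

/-- The set of total `Φ`-lengths of simple paths from `σ` to `ξ` inside `Ω` whose
consecutive states differ in exactly one coordinate. -/
def PathSums {N S : Type} (Ω : Finset (N → S)) (Φ : (N → S) → (N → S) → ℕ)
    (σ ξ : N → S) : Set ℕ :=
  {s | ∃ (ℓ : ℕ) (η : Fin (ℓ + 1) → (N → S)),
    (∀ i, η i ∈ Ω) ∧ Function.Injective η ∧
    η 0 = σ ∧ η (Fin.last ℓ) = ξ ∧
    (∀ i : Fin ℓ, AdjOne (η i.castSucc) (η i.succ)) ∧
    s = ∑ i : Fin ℓ, Φ (η i.castSucc) (η i.succ)}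

/-- A single move of the Glauber dynamics: recolor one vertex with a color not
appearing in its `Ĝ`-neighborhood. -/
def GlauberMove {V : Type} (G₁ G₂ : SimpleGraph V) {k : ℕ}
    (σ τ : HatVertex G₁ G₂ → Fin k) : Prop :=
  ∃ (v : HatVertex G₁ G₂) (c : Fin k),
    (∀ w, (hatG G₁ G₂).Adj v w → σ w ≠ c) ∧ τ = Function.update σ v c

end

/-!
Gluing the couplings given for adjacent states along a shortest path from `x` to `y` yields a
coupling of `P x` and `P y` with `E Φ ≤ β Φ(x, y)`; gluing only needs the triangle inequality,
which holds because `Φ` is a path metric. Mixing these couplings, step by step, starting from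
`δ_{X₀} ⊗ π` and using stationarity of `π`, gives a coupling of `Pᵗ(X₀, ·)` and `π` with
`E Φ ≤ max(β, 0)ᵗ D`. As `Φ ≥ 1` off the diagonal, this bounds the total variation distance,
and `max(β, 0) ≤ exp(β - 1)` makes the bound at most `ε` once `t ≥ log(D/ε)/(1 - β)`: `c = 1`.
-/

open Finset

section Coupling

variable {X : Type} [Fintype X]

def transportCost (γ : X × X → ℝ) (d : X → X → ℝ) : ℝ :=
  ∑ q, γ q * d q.1 q.2

lemma transportCost_mix (γ : X × X → ℝ) (K : X × X → X × X → ℝ) (d : X → X → ℝ) :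
    transportCost (fun q => ∑ p, γ p * K p q) d = ∑ p, γ p * transportCost (K p) d := by
  simp only [transportCost, sum_mul, mul_sum, mul_assoc]
  exact sum_comm

lemma transportCost_deltaDist_mul_le {x : X} {ν : X → ℝ} {d : X → X → ℝ} {D : ℝ}
    (hν : ∀ y, 0 ≤ ν y) (hν1 : ∑ y, ν y = 1) (hd : ∀ y, ν y ≠ 0 → d x y ≤ D) :
    transportCost (fun q => deltaDist x q.1 * ν q.2) d ≤ D := by
  calc transportCost (fun q => deltaDist x q.1 * ν q.2) d = ∑ y, ν y * d x y := by
        simp [transportCost, Fintype.sum_prod_type, deltaDist]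
    _ ≤ ∑ y, ν y * D := by
        refine sum_le_sum fun y _ => ?_
        by_cases hy : ν y = 0
        · simp [hy]
        · exact mul_le_mul_of_nonneg_left (hd y hy) (hν y)
    _ = D := by rw [← sum_mul, hν1, one_mul]

namespace IsCoupling

variable {γ : X × X → ℝ} {μ ν : X → ℝ}

lemma le_left (h : IsCoupling γ μ ν) (a b : X) : γ (a, b) ≤ μ a := by
  rw [← h.2.1 a]
  exact single_le_sum (fun c _ => h.1 (a, c)) (mem_univ b)

lemma le_right (h : IsCoupling γ μ ν) (a b : X) : γ (a, b) ≤ ν b := by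
  rw [← h.2.2 b]
  exact single_le_sum (fun c _ => h.1 (c, b)) (mem_univ a)

lemma eq_zero_of_left (h : IsCoupling γ μ ν) {a : X} (ha : μ a = 0) (b : X) : γ (a, b) = 0 :=
  le_antisymm (ha ▸ h.le_left a b) (h.1 _)

lemma eq_zero_of_right (h : IsCoupling γ μ ν) (a : X) {b : X} (hb : ν b = 0) : γ (a, b) = 0 :=
  le_antisymm (hb ▸ h.le_right a b) (h.1 _)

lemma mem_of_ne_zero {Ω : Set X} (h : IsCoupling γ μ ν) (hμ : ∀ x ∉ Ω, μ x = 0)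
    (hν : ∀ x ∉ Ω, ν x = 0) {a b : X} (hab : γ (a, b) ≠ 0) : a ∈ Ω ∧ b ∈ Ω := by
  by_contra hout
  rcases not_and_or.mp hout with ha | hb
  · exact hab (h.eq_zero_of_left (hμ a ha) b)
  · exact hab (h.eq_zero_of_right a (hν b hb))

lemma diag (hμ : ∀ x, 0 ≤ μ x) :
    IsCoupling (fun q => if q.1 = q.2 then μ q.1 else 0) μ μ := by
  refine ⟨fun q => ?_, fun a => ?_, fun b => ?_⟩
  · dsimp only
    split_ifs
    exacts [hμ _, le_rfl]
  · simp
  · simp [eq_comm]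

lemma deltaDist_mul (x : X) (hν : ∀ y, 0 ≤ ν y) (hν1 : ∑ y, ν y = 1) :
    IsCoupling (fun q => deltaDist x q.1 * ν q.2) (deltaDist x) ν := by
  refine ⟨fun q => mul_nonneg ?_ (hν _), fun a => ?_, fun b => ?_⟩
  · unfold deltaDist; split_ifs <;> norm_num
  · simp only [← mul_sum, hν1, mul_one]
  · simp [deltaDist]

/-- Gluing: compose `γ₁` and `γ₂` through their common marginal `κ`, i.e.
`γ (a, c) = ∑ b, γ₁ (a, b) γ₂ (b, c) / κ b`. -/
lemma glue {κ : X → ℝ} {γ₁ γ₂ : X × X → ℝ} {d : X → X → ℝ}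
    (h₁ : IsCoupling γ₁ μ κ) (h₂ : IsCoupling γ₂ κ ν)
    (htri : ∀ a b c, γ₁ (a, b) ≠ 0 → γ₂ (b, c) ≠ 0 → d a c ≤ d a b + d b c) :
    ∃ γ, IsCoupling γ μ ν ∧
      transportCost γ d ≤ transportCost γ₁ d + transportCost γ₂ d := by
  -- where `κ b = 0` both `γ₁ (·, b)` and `γ₂ (b, ·)` vanish, as does the junk value `x / 0 = 0`
  set w : X → X → X → ℝ := fun a b c => γ₁ (a, b) * γ₂ (b, c) / κ b with hw
  have hκ : ∀ b, 0 ≤ κ b := fun b => (h₂.1 (b, b)).trans (h₂.le_left b b)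
  have hw0 : ∀ a b c, 0 ≤ w a b c := fun a b c =>
    div_nonneg (mul_nonneg (h₁.1 _) (h₂.1 _)) (hκ b)
  have hsum_c : ∀ a b, ∑ c, w a b c = γ₁ (a, b) := by
    intro a b
    by_cases hb : κ b = 0
    · simp [hw, hb, h₁.eq_zero_of_right a hb]
    · simp only [hw, ← sum_div, ← mul_sum, h₂.2.1 b]
      field_simp
  have hsum_a : ∀ b c, ∑ a, w a b c = γ₂ (b, c) := by
    intro b c
    by_cases hb : κ b = 0
    · simp [hw, hb, h₂.eq_zero_of_left hb c]
    · simp only [hw, ← sum_div, ← sum_mul, h₁.2.2 b]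
      field_simp
  have hpoint : ∀ a b c, w a b c * d a c ≤ w a b c * d a b + w a b c * d b c := by
    intro a b c
    by_cases hw_ne : w a b c = 0
    · simp [hw_ne]
    · obtain ⟨⟨h₁ne, h₂ne⟩, -⟩ := by simpa [hw, not_or] using hw_ne
      rw [← mul_add]
      exact mul_le_mul_of_nonneg_left (htri a b c h₁ne h₂ne) (hw0 a b c)
  refine ⟨fun q => ∑ b, w q.1 b q.2, ⟨fun q => sum_nonneg fun b _ => hw0 _ _ _,
    fun a => ?_, fun c => ?_⟩, ?_⟩
  · simp only
    rw [sum_comm, sum_congr rfl fun b _ => hsum_c a b, h₁.2.1 a]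
  · simp only
    rw [sum_comm, sum_congr rfl fun b _ => hsum_a b c, h₂.2.2 c]
  · calc transportCost (fun q => ∑ b, w q.1 b q.2) d
        = ∑ a, ∑ c, ∑ b, w a b c * d a c := by
          simp only [transportCost, Fintype.sum_prod_type, sum_mul]
      _ ≤ ∑ a, ∑ c, ∑ b, (w a b c * d a b + w a b c * d b c) := by
          gcongr with a _ c _ b _
          exact hpoint a b c
      _ = ∑ a, ∑ b, (∑ c, w a b c) * d a b + ∑ b, ∑ c, (∑ a, w a b c) * d b c := by
          simp only [sum_add_distrib, sum_mul]
          congr 1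
          · exact sum_congr rfl fun a _ => sum_comm
          · exact (sum_congr rfl fun a _ => sum_comm).trans
              (sum_comm.trans (sum_congr rfl fun b _ => sum_comm))
      _ = transportCost γ₁ d + transportCost γ₂ d := by
          simp only [hsum_c, hsum_a, transportCost, Fintype.sum_prod_type]

lemma tvDist_le_offDiag (h : IsCoupling γ μ ν) :
    tvDist μ ν ≤ ∑ q, if q.1 = q.2 then 0 else γ q := by
  set off : X × X → ℝ := fun q => if q.1 = q.2 then 0 else γ q with hoff
  have hoff0 : ∀ q, 0 ≤ off q := fun q => by
    simp only [hoff]; split_ifs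
    exacts [le_rfl, h.1 q]
  -- the diagonal mass `γ (x, x)` appears in both marginals and cancels
  have hdiff : ∀ x, μ x - ν x = ∑ y, off (x, y) - ∑ y, off (y, x) := by
    intro x
    rw [← h.2.1 x, ← h.2.2 x, ← sum_sub_distrib, ← sum_sub_distrib]
    refine sum_congr rfl fun y _ => ?_
    by_cases hxy : x = y
    · subst hxy; simp [hoff]
    · simp [hoff, hxy, Ne.symm hxy]
  have habs : ∀ x, |μ x - ν x| ≤ ∑ y, off (x, y) + ∑ y, off (y, x) := by
    intro x
    rw [hdiff, abs_le]
    have := sum_nonneg fun y (_ : y ∈ univ) => hoff0 (x, y)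
    have := sum_nonneg fun y (_ : y ∈ univ) => hoff0 (y, x)
    constructor <;> linarith
  calc tvDist μ ν ≤ (∑ x, (∑ y, off (x, y) + ∑ y, off (y, x))) / 2 := by
        unfold tvDist; gcongr with x; exact habs x
    _ = ∑ q, off q := by
        rw [sum_add_distrib, sum_comm (f := fun x y => off (y, x)), ← Fintype.sum_prod_type]
        ring

lemma tvDist_le_transportCost (h : IsCoupling γ μ ν) {d : X → X → ℝ}
    (hd : ∀ a b, γ (a, b) ≠ 0 → a ≠ b → 1 ≤ d a b) (hd0 : ∀ a b, 0 ≤ d a b) :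
    tvDist μ ν ≤ transportCost γ d := by
  refine h.tvDist_le_offDiag.trans (sum_le_sum fun q _ => ?_)
  split_ifs with hq
  · exact mul_nonneg (h.1 q) (hd0 _ _)
  · by_cases hγq : γ q = 0
    · simp [hγq]
    · exact le_mul_of_one_le_right (h.1 q) (hd q.1 q.2 hγq hq)

lemma stepDist_mix {P : X → X → ℝ} (h : IsCoupling γ μ ν) {K : X × X → X × X → ℝ}
    (hK : ∀ p, γ p ≠ 0 → IsCoupling (K p) (P p.1) (P p.2)) :
    IsCoupling (fun q => ∑ p, γ p * K p q) (stepDist P μ) (stepDist P ν) := by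
  have hrow : ∀ p a, γ p * ∑ b, K p (a, b) = γ p * P p.1 a := fun p a => by
    by_cases hp : γ p = 0
    · simp [hp]
    · rw [(hK p hp).2.1 a]
  have hcol : ∀ p b, γ p * ∑ a, K p (a, b) = γ p * P p.2 b := fun p b => by
    by_cases hp : γ p = 0
    · simp [hp]
    · rw [(hK p hp).2.2 b]
  refine ⟨fun q => sum_nonneg fun p _ => ?_, fun a => ?_, fun b => ?_⟩
  · by_cases hp : γ p = 0
    · simp [hp]
    · exact mul_nonneg (h.1 p) ((hK p hp).1 q)
  · simp only [stepDist]
    rw [sum_comm]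
    simp only [← mul_sum, hrow, Fintype.sum_prod_type, ← sum_mul, h.2.1]
  · simp only [stepDist]
    rw [sum_comm]
    simp only [← mul_sum, hcol, Fintype.sum_prod_type]
    rw [sum_comm]
    simp only [← sum_mul, h.2.2]

end IsCoupling

end Coupling

section Contraction

variable {X : Type} [Fintype X] {P : X → X → ℝ} {Ω : Set X}

lemma stepDist_eq_zero_of_notMem (hP : ∀ x ∈ Ω, ∀ y ∉ Ω, P x y = 0) {μ : X → ℝ}
    (hμ : ∀ x ∉ Ω, μ x = 0) {y : X} (hy : y ∉ Ω) : stepDist P μ y = 0 := by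
  refine sum_eq_zero fun x _ => ?_
  by_cases hx : x ∈ Ω
  · rw [hP x hx y hy, mul_zero]
  · rw [hμ x hx, zero_mul]

lemma iterate_stepDist_eq_zero_of_notMem (hP : ∀ x ∈ Ω, ∀ y ∉ Ω, P x y = 0) {μ : X → ℝ}
    (hμ : ∀ x ∉ Ω, μ x = 0) (n : ℕ) : ∀ y ∉ Ω, (stepDist P)^[n] μ y = 0 := by
  induction n with
  | zero => exact hμ
  | succ n ih =>
    intro y hy
    rw [Function.iterate_succ_apply']
    exact stepDist_eq_zero_of_notMem hP ih hy

variable {d : X → X → ℝ} {β : ℝ}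

lemma exists_isCoupling_stepDist
    (hK : ∀ x ∈ Ω, ∀ y ∈ Ω, ∃ γ, IsCoupling γ (P x) (P y) ∧ transportCost γ d ≤ β * d x y)
    (hd0 : ∀ x y, 0 ≤ d x y) {μ ν : X → ℝ} (hμ : ∀ x ∉ Ω, μ x = 0) (hν : ∀ x ∉ Ω, ν x = 0)
    {γ : X × X → ℝ} (hγ : IsCoupling γ μ ν) :
    ∃ γ', IsCoupling γ' (stepDist P μ) (stepDist P ν) ∧
      transportCost γ' d ≤ max β 0 * transportCost γ d := by
  choose! K hKc hKd using hK
  have hsupp : ∀ p, γ p ≠ 0 → p.1 ∈ Ω ∧ p.2 ∈ Ω := fun p hp => hγ.mem_of_ne_zero hμ hν hp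
  refine ⟨_, hγ.stepDist_mix (K := fun p => K p.1 p.2)
    (fun p hp => hKc _ (hsupp p hp).1 _ (hsupp p hp).2), ?_⟩
  rw [transportCost_mix, transportCost, mul_sum]
  refine sum_le_sum fun p _ => ?_
  by_cases hp : γ p = 0
  · simp [hp]
  · calc γ p * transportCost (K p.1 p.2) d ≤ γ p * (max β 0 * d p.1 p.2) := by
          gcongr
          · exact hγ.1 p
          · exact (hKd _ (hsupp p hp).1 _ (hsupp p hp).2).trans
              (mul_le_mul_of_nonneg_right (le_max_left β 0) (hd0 _ _))
      _ = max β 0 * (γ p * d p.1 p.2) := by ring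

lemma exists_isCoupling_iterate_stepDist (hP : ∀ x ∈ Ω, ∀ y ∉ Ω, P x y = 0)
    (hK : ∀ x ∈ Ω, ∀ y ∈ Ω, ∃ γ, IsCoupling γ (P x) (P y) ∧ transportCost γ d ≤ β * d x y)
    (hd0 : ∀ x y, 0 ≤ d x y) {μ ν : X → ℝ} (hμ : ∀ x ∉ Ω, μ x = 0) (hν : ∀ x ∉ Ω, ν x = 0)
    {γ : X × X → ℝ} (hγ : IsCoupling γ μ ν) (n : ℕ) :
    ∃ γ', IsCoupling γ' ((stepDist P)^[n] μ) ((stepDist P)^[n] ν) ∧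
      transportCost γ' d ≤ max β 0 ^ n * transportCost γ d := by
  induction n generalizing μ ν γ with
  | zero => exact ⟨γ, hγ, by simp⟩
  | succ n ih =>
    obtain ⟨γ₁, hγ₁, hcost₁⟩ := exists_isCoupling_stepDist hK hd0 hμ hν hγ
    obtain ⟨γ', hγ', hcost'⟩ := ih (fun x hx => stepDist_eq_zero_of_notMem hP hμ hx)
      (fun x hx => stepDist_eq_zero_of_notMem hP hν hx) hγ₁
    refine ⟨γ', hγ', hcost'.trans ?_⟩
    rw [pow_succ, mul_assoc]
    exact mul_le_mul_of_nonneg_left hcost₁ (pow_nonneg (le_max_right β 0) n)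

end Contraction

namespace SimpleGraph

variable {V : Type} {G : SimpleGraph V} (Φ : V → V → ℕ)

def Walk.weightedLength {u v : V} (p : G.Walk u v) : ℕ :=
  (p.darts.map fun e => Φ e.fst e.snd).sum

namespace Walk

@[simp]
lemma weightedLength_nil {u : V} : (nil : G.Walk u u).weightedLength Φ = 0 := rfl

@[simp]
lemma weightedLength_cons {u v w : V} (h : G.Adj u v) (p : G.Walk v w) :
    (cons h p).weightedLength Φ = Φ u v + p.weightedLength Φ := rfl

@[simp]
lemma weightedLength_append {u v w : V} (p : G.Walk u v) (q : G.Walk v w) :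
    (p.append q).weightedLength Φ = p.weightedLength Φ + q.weightedLength Φ := by
  simp [weightedLength, darts_append]

lemma weightedLength_bypass_le [DecidableEq V] {u v : V} (p : G.Walk u v) :
    p.bypass.weightedLength Φ ≤ p.weightedLength Φ :=
  ((darts_bypass_sublist_darts p).map _).sum_le_sum fun _ _ => Nat.zero_le _

lemma weightedLength_eq_sum_getVert {u v : V} (p : G.Walk u v) :
    p.weightedLength Φ = ∑ i ∈ range p.length, Φ (p.getVert i) (p.getVert (i + 1)) := by
  induction p with
  | nil => rfl
  | cons h p ih =>
    rw [weightedLength_cons, ih, length_cons, sum_range_succ', add_comm]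
    simp only [getVert_cons_succ, getVert_zero]

end Walk

lemma exists_walk_weightedLength_eq_sum {ℓ : ℕ} {η : Fin (ℓ + 1) → V}
    (hη : ∀ i : Fin ℓ, G.Adj (η i.castSucc) (η i.succ)) :
    ∃ p : G.Walk (η 0) (η (Fin.last ℓ)),
      p.weightedLength Φ = ∑ i : Fin ℓ, Φ (η i.castSucc) (η i.succ) := by
  induction ℓ with
  | zero => exact ⟨Walk.nil, rfl⟩
  | succ ℓ ih =>
    obtain ⟨p, hp⟩ := ih (η := fun i => η i.succ) fun i => hη i.succ
    have h₀ : G.Adj (η 0) (η (Fin.succ 0)) := hη 0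
    refine ⟨Walk.cons h₀ p, ?_⟩
    show Φ (η 0) (η (Fin.succ 0)) + p.weightedLength Φ = _
    rw [hp, Fin.sum_univ_succ]
    rfl

end SimpleGraph

section PathMetric

variable {N S : Type} {Ω : Finset (N → S)} {Φ : (N → S) → (N → S) → ℕ}

def oneStepGraph (Ω : Finset (N → S)) : SimpleGraph (N → S) where
  Adj σ ξ := σ ∈ Ω ∧ ξ ∈ Ω ∧ AdjOne σ ξ
  symm := by
    constructor
    rintro σ ξ ⟨hσ, hξ, i, hi, hj⟩
    exact ⟨hξ, hσ, i, Ne.symm hi, fun j hji => (hj j hji).symm⟩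
  loopless := by
    constructor
    rintro σ ⟨-, -, i, hi, -⟩
    exact hi rfl

lemma exists_walk_of_mem_pathSums {σ ξ : N → S} {s : ℕ} (hs : s ∈ PathSums Ω Φ σ ξ) :
    ∃ p : (oneStepGraph Ω).Walk σ ξ, p.weightedLength Φ = s := by
  obtain ⟨ℓ, η, hηΩ, -, rfl, rfl, hηadj, rfl⟩ := hs
  exact SimpleGraph.exists_walk_weightedLength_eq_sum Φ fun i => ⟨hηΩ _, hηΩ _, hηadj i⟩

lemma weightedLength_mem_pathSums {σ ξ : N → S} (hσ : σ ∈ Ω)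
    {p : (oneStepGraph Ω).Walk σ ξ} (hp : p.IsPath) :
    p.weightedLength Φ ∈ PathSums Ω Φ σ ξ := by
  refine ⟨p.length, fun i => p.getVert i, fun i => ?_, fun i j hij => ?_, p.getVert_zero,
    p.getVert_length, fun i => (p.adj_getVert_succ i.isLt).2.2, ?_⟩
  · rcases i with ⟨_ | i, hi⟩
    · simpa using hσ
    · exact (p.adj_getVert_succ (by omega : i < p.length)).2.1
  · exact Fin.ext (hp.getVert_injOn (by simp; omega) (by simp; omega) hij)
  · rw [p.weightedLength_eq_sum_getVert,
      ← Fin.sum_univ_eq_sum_range (fun i => Φ (p.getVert i) (p.getVert (i + 1)))]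
    rfl

def IsPathMetric (Ω : Finset (N → S)) (Φ : (N → S) → (N → S) → ℕ) : Prop :=
  ∀ σ ∈ Ω, ∀ ξ ∈ Ω, IsLeast (PathSums Ω Φ σ ξ) (Φ σ ξ)

namespace IsPathMetric

variable {σ ξ : N → S}

lemma le_weightedLength (hΦ : IsPathMetric Ω Φ) (hσ : σ ∈ Ω) (hξ : ξ ∈ Ω)
    (p : (oneStepGraph Ω).Walk σ ξ) : Φ σ ξ ≤ p.weightedLength Φ :=
  ((hΦ σ hσ ξ hξ).2 (weightedLength_mem_pathSums hσ p.bypass_isPath)).trans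
    (p.weightedLength_bypass_le Φ)

lemma exists_walk (hΦ : IsPathMetric Ω Φ) (hσ : σ ∈ Ω) (hξ : ξ ∈ Ω) :
    ∃ p : (oneStepGraph Ω).Walk σ ξ, p.weightedLength Φ = Φ σ ξ :=
  exists_walk_of_mem_pathSums (hΦ σ hσ ξ hξ).1

lemma self_eq_zero (hΦ : IsPathMetric Ω Φ) (hσ : σ ∈ Ω) : Φ σ σ = 0 :=
  Nat.le_zero.mp (hΦ.le_weightedLength hσ hσ .nil)

lemma triangle (hΦ : IsPathMetric Ω Φ) {a b c : N → S} (ha : a ∈ Ω) (hb : b ∈ Ω) (hc : c ∈ Ω) :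
    Φ a c ≤ Φ a b + Φ b c := by
  obtain ⟨p, hp⟩ := hΦ.exists_walk ha hb
  obtain ⟨q, hq⟩ := hΦ.exists_walk hb hc
  simpa [hp, hq] using hΦ.le_weightedLength ha hc (p.append q)

end IsPathMetric

end PathMetric

section PathCoupling

variable {N S : Type} [Fintype (N → S)] {Ω : Finset (N → S)} {Φ : (N → S) → (N → S) → ℕ}
  {P : (N → S) → (N → S) → ℝ} {β : ℝ}

lemma IsPathMetric.exists_isCoupling_of_walk (hΦ : IsPathMetric Ω Φ)
    (hP0 : ∀ σ ∈ Ω, ∀ τ, 0 ≤ P σ τ) (hP : ∀ σ ∈ Ω, ∀ τ ∉ Ω, P σ τ = 0)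
    (hadj : ∀ X ∈ Ω, ∀ Y ∈ Ω, AdjOne X Y → ∃ γ, IsCoupling γ (P X) (P Y) ∧
      transportCost γ (fun a b => (Φ a b : ℝ)) ≤ β * Φ X Y)
    {x y : N → S} (hx : x ∈ Ω) (hy : y ∈ Ω) (p : (oneStepGraph Ω).Walk x y) :
    ∃ γ, IsCoupling γ (P x) (P y) ∧
      transportCost γ (fun a b => (Φ a b : ℝ)) ≤ β * p.weightedLength Φ := by
  induction p with
  | nil =>
    refine ⟨_, IsCoupling.diag (hP0 _ hx), le_of_eq ?_⟩
    simp only [transportCost, SimpleGraph.Walk.weightedLength_nil, Nat.cast_zero, mul_zero]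
    refine sum_eq_zero fun q _ => ?_
    split_ifs with hq
    · by_cases hq₁ : q.1 ∈ Ω
      · simp [← hq, hΦ.self_eq_zero hq₁]
      · simp [hP _ hx _ hq₁]
    · simp
  | @cons x v y h q ih =>
    have hv : v ∈ Ω := h.2.1
    obtain ⟨γ₁, hγ₁, hcost₁⟩ := hadj x hx v hv h.2.2
    obtain ⟨γ₂, hγ₂, hcost₂⟩ := ih hv hy
    have htri : ∀ a b c, γ₁ (a, b) ≠ 0 → γ₂ (b, c) ≠ 0 → (Φ a c : ℝ) ≤ Φ a b + Φ b c := by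
      intro a b c hab hbc
      obtain ⟨ha, hb⟩ := hγ₁.mem_of_ne_zero (hP x hx) (hP v hv) hab
      obtain ⟨-, hc⟩ := hγ₂.mem_of_ne_zero (hP v hv) (hP y hy) hbc
      exact_mod_cast hΦ.triangle ha hb hc
    obtain ⟨γ, hγ, hcost⟩ := hγ₁.glue hγ₂ htri
    refine ⟨γ, hγ, hcost.trans ?_⟩
    rw [SimpleGraph.Walk.weightedLength_cons, Nat.cast_add, mul_add]
    exact add_le_add hcost₁ hcost₂

lemma IsPathMetric.exists_isCoupling (hΦ : IsPathMetric Ω Φ)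
    (hP0 : ∀ σ ∈ Ω, ∀ τ, 0 ≤ P σ τ) (hP : ∀ σ ∈ Ω, ∀ τ ∉ Ω, P σ τ = 0)
    (hadj : ∀ X ∈ Ω, ∀ Y ∈ Ω, AdjOne X Y → ∃ γ, IsCoupling γ (P X) (P Y) ∧
      transportCost γ (fun a b => (Φ a b : ℝ)) ≤ β * Φ X Y)
    {x y : N → S} (hx : x ∈ Ω) (hy : y ∈ Ω) :
    ∃ γ, IsCoupling γ (P x) (P y) ∧ transportCost γ (fun a b => (Φ a b : ℝ)) ≤ β * Φ x y := by
  obtain ⟨p, hp⟩ := hΦ.exists_walk hx hy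
  simpa [hp] using hΦ.exists_isCoupling_of_walk hP0 hP hadj hx hy p

end PathCoupling

lemma max_pow_mul_le_of_log_div_le {β ε D : ℝ} {t : ℕ} (hβ : β < 1) (hD : 0 < D) (hε : 0 < ε)
    (ht : Real.log (D / ε) / (1 - β) ≤ t) : max β 0 ^ t * D ≤ ε := by
  have hlog : Real.log (D / ε) ≤ t * (1 - β) := (div_le_iff₀ (by linarith)).mp ht
  have hb : max β 0 ≤ Real.exp (β - 1) :=
    max_le (by linarith [Real.add_one_le_exp (β - 1)]) (Real.exp_pos _).le
  calc max β 0 ^ t * D ≤ Real.exp (β - 1) ^ t * D := by gcongr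
    _ = Real.exp (-(t * (1 - β))) * D := by rw [← Real.exp_nat_mul]; ring_nf
    _ ≤ Real.exp (-Real.log (D / ε)) * D := by gcongr
    _ = ε := by rw [Real.exp_neg, Real.exp_log (div_pos hD hε)]; field_simp

/-- **Path coupling lemma, Bubley–Dyer.** For a Markov chain on a finite state
space `Ω ⊆ S^N`, if `Φ : Ω × Ω → {0,…,D}` is a path metric for the "differ in one
coordinate" adjacency, `(Ω, ∼)` is connected, and for every adjacent pair there is a coupling
of the one-step distributions contracting `Φ` by a factor `β < 1`, then
`T_mix(ε) ≤ c·log(D/ε)/(1−β)` for an absolute constant `c`. -/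
theorem path_coupling_lemma :
    ∃ c : ℝ, 0 < c ∧
      ∀ (S N : Type) [Fintype S] [Fintype N] [DecidableEq S] [DecidableEq N],
      ∀ (Ω : Finset (N → S)) (P : (N → S) → (N → S) → ℝ) (π : (N → S) → ℝ)
        (D : ℕ) (Φ : (N → S) → (N → S) → ℕ) (β : ℝ),
        Ω.Nonempty →
        0 < D →
        -- `P` is a transition matrix on `Ω`
        (∀ σ ∈ Ω, ∀ τ, 0 ≤ P σ τ) →
        (∀ σ ∈ Ω, ∑ τ, P σ τ = 1) →
        (∀ σ ∈ Ω, ∀ τ, τ ∉ Ω → P σ τ = 0) →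
        -- `π` is a stationary distribution supported on `Ω`
        (∀ σ, 0 ≤ π σ) →
        (∑ σ, π σ = 1) →
        (∀ σ, σ ∉ Ω → π σ = 0) →
        stepDist P π = π →
        -- `Φ` takes values in `{0,…,D}` and is positive off the diagonal
        (∀ σ ∈ Ω, ∀ ξ ∈ Ω, Φ σ ξ ≤ D) →
        (∀ σ ∈ Ω, ∀ ξ ∈ Ω, σ ≠ ξ → 1 ≤ Φ σ ξ) →
        -- `(Ω, ∼)` is connected
        (∀ σ ∈ Ω, ∀ ξ ∈ Ω, (PathSums Ω Φ σ ξ).Nonempty) →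
        -- `Φ` is the minimum over simple paths of the sum of `Φ` along the path
        (∀ σ ∈ Ω, ∀ ξ ∈ Ω, IsLeast (PathSums Ω Φ σ ξ) (Φ σ ξ)) →
        -- contraction along a coupling, for pairs differing in one coordinate
        β < 1 →
        (∀ X ∈ Ω, ∀ Y ∈ Ω, AdjOne X Y →
          ∃ γ : ((N → S) × (N → S)) → ℝ, IsCoupling γ (P X) (P Y) ∧
            ∑ q : (N → S) × (N → S), γ q * (Φ q.1 q.2 : ℝ) ≤ β * (Φ X Y : ℝ)) →
        ∀ ε : ℝ, 0 < ε → ε < 1 → ∀ X₀ ∈ Ω, ∀ t : ℕ,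
          c * Real.log ((D : ℝ) / ε) / (1 - β) ≤ (t : ℝ) →
          tvDist ((stepDist P)^[t] (deltaDist X₀)) π ≤ ε := by
  refine ⟨1, one_pos, ?_⟩
  intro S N _ _ _ _ Ω P π D Φ β _ hD hP0 _ hP hπ0 hπ1 hπΩ hπ hΦD hΦ1 _ hΦ hβ hadj ε hε _ X₀
    hX₀ t ht
  have hδ : ∀ x ∉ Ω, deltaDist X₀ x = 0 := fun x hx => if_neg (ne_of_mem_of_not_mem hX₀ hx).symm
  obtain ⟨γ, hγ, hcost⟩ := exists_isCoupling_iterate_stepDist (Ω := (Ω : Set (N → S))) hP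
    (fun x hx y hy => IsPathMetric.exists_isCoupling hΦ hP0 hP hadj hx hy)
    (fun _ _ => Nat.cast_nonneg _) hδ hπΩ (IsCoupling.deltaDist_mul X₀ hπ0 hπ1) t
  rw [Function.iterate_fixed hπ] at hγ
  have hμ := iterate_stepDist_eq_zero_of_notMem (Ω := (Ω : Set (N → S))) hP hδ t
  calc tvDist ((stepDist P)^[t] (deltaDist X₀)) π
      ≤ transportCost γ (fun a b => (Φ a b : ℝ)) := hγ.tvDist_le_transportCost
        (fun a b hab hne => by
          obtain ⟨ha, hb⟩ := hγ.mem_of_ne_zero hμ hπΩ hab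
          exact_mod_cast hΦ1 a ha b hb hne)
        (fun _ _ => Nat.cast_nonneg _)
    _ ≤ max β 0 ^ t * D := hcost.trans (mul_le_mul_of_nonneg_left
        (transportCost_deltaDist_mul_le hπ0 hπ1 fun y hy => by
          exact_mod_cast hΦD X₀ hX₀ y (by_contra fun h => hy (hπΩ y h)))
        (pow_nonneg (le_max_right β 0) t))
    _ ≤ ε := max_pow_mul_le_of_log_div_le hβ (by exact_mod_cast hD) hε (by simpa using ht)
end

section
/- Let G₁ = (V,E₁) and G₂ = (V,E₂) be graphs on a common finite vertex set with maximum degree at most Δ, and let k be a positive integer. For every pair of colorings X, Y ∈ {1,…,k}^{V̂} that differ at exactly one vertex v*, there exists a coupling of the one-step transition distributions of the Glauber dynamics started from X and from Y under which E[Ĥ(X′,Y′) − Ĥ(X,Y)] ≤ (1/(mk)) · ( −W(v*)·(k − d_Ĝ(v*)) + Σ_{w ∈ N_Ĝ(v*)} W(w) ), where d_Ĝ(v*) denotes the degree of v* in Ĝ. -/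
open Classical

/-!
Couple the two chains by updating the same vertex `u` in both, with the colours `X v` and `Y v`
interchanged when `u` is a neighbour of the disagreeing vertex `v`. Updating `v` itself removes the
disagreement for every colour not blocked at `v`, i.e. for at least `k - d(v)` colours. At a
neighbour `u`, the colour `X v` is blocked in `X` and its partner `Y v` is blocked in `Y`, and any
other colour is free in `X` iff it is free in `Y`; so only the colour `Y v` can create a new
disagreement, at cost `W u`. Every other update keeps the disagreement set inside `{v}`.
-/

section UniformLaw

variable {ι : Type*} {Ω : Type} [Fintype ι] [DecidableEq Ω]

noncomputable def uniformLaw (F : ι → Ω) (a : Ω) : ℝ :=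
  (∑ i, if F i = a then 1 else 0) / Fintype.card ι

theorem uniformLaw_comp_equiv (F : ι → Ω) (e : ι ≃ ι) : uniformLaw (F ∘ e) = uniformLaw F := by
  funext a
  exact congrArg (· / _) (e.sum_comp fun i => if F i = a then (1 : ℝ) else 0)

variable [Fintype Ω]

theorem sum_uniformLaw_mul (F : ι → Ω) (φ : Ω → ℝ) :
    ∑ a, uniformLaw F a * φ a = (∑ i, φ (F i)) / Fintype.card ι := by
  simp only [uniformLaw, div_mul_eq_mul_div, ← Finset.sum_div, Finset.sum_mul, ite_mul, one_mul,
    zero_mul]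
  rw [Finset.sum_comm]
  simp

theorem isCoupling_uniformLaw (F G : ι → Ω) :
    IsCoupling (uniformLaw fun i => (F i, G i)) (uniformLaw F) (uniformLaw G) := by
  refine ⟨fun q => by unfold uniformLaw; positivity, fun a => ?_, fun b => ?_⟩ <;>
  · simp only [uniformLaw, ← Finset.sum_div, Prod.mk.injEq, ite_and]
    rw [Finset.sum_comm]
    simp

end UniformLaw

section Glauber

variable {α β : Type*}

noncomputable def glauberUpdate [DecidableEq α] (H : SimpleGraph α) (σ : α → β) (u : α) (c : β) :
    α → β :=
  if ∀ w, H.Adj u w → σ w ≠ c then Function.update σ u c else σ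

variable {H : SimpleGraph α}

theorem glauberUpdate_apply_of_ne [DecidableEq α] (σ : α → β) {u w : α} (c : β) (h : w ≠ u) :
    glauberUpdate H σ u c w = σ w := by
  unfold glauberUpdate
  split_ifs
  exacts [Function.update_of_ne h _ _, rfl]

theorem glauberUpdate_of_adj [DecidableEq α] {σ : α → β} {u w : α} (h : H.Adj u w) :
    glauberUpdate H σ u (σ w) = σ :=
  if_neg fun hfree => hfree w h rfl

variable {X Y : α → β} {v : α}

theorem free_iff_of_eq_off (hXY : ∀ w, w ≠ v → X w = Y w) {u : α} {c : β}
    (hu : H.Adj u v → X v ≠ c ∧ Y v ≠ c) :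
    (∀ w, H.Adj u w → X w ≠ c) ↔ (∀ w, H.Adj u w → Y w ≠ c) := by
  refine forall_congr' fun w => imp_congr_right fun hw => ?_
  rcases eq_or_ne w v with rfl | hwv
  · exact iff_of_true (hu hw).1 (hu hw).2
  · rw [hXY w hwv]

theorem glauberUpdate_eq_off [DecidableEq α] (hXY : ∀ w, w ≠ v → X w = Y w) {u : α} {c : β}
    (hfree : (∀ w, H.Adj u w → X w ≠ c) ↔ (∀ w, H.Adj u w → Y w ≠ c)) :
    ∀ w, w ≠ v → glauberUpdate H X u c w = glauberUpdate H Y u c w := by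
  intro w hwv
  by_cases hc : ∀ w, H.Adj u w → X w ≠ c
  · simp only [glauberUpdate, if_pos hc, if_pos (hfree.1 hc), Function.update_apply, hXY w hwv]
  · simp only [glauberUpdate, if_neg hc, if_neg (mt hfree.2 hc), hXY w hwv]

def weightedHamming [Fintype α] [DecidableEq β] (W : α → ℝ) (σ τ : α → β) : ℝ :=
  ∑ a, if σ a ≠ τ a then W a else 0

variable {W : α → ℝ}

theorem weightedHamming_le_of_eq_off [Fintype α] [DecidableEq β] (hW : ∀ a, 0 ≤ W a)
    {σ τ : α → β} {s : Finset α} (h : ∀ a ∉ s, σ a = τ a) :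
    weightedHamming W σ τ ≤ ∑ a ∈ s, W a := by
  rw [weightedHamming, ← Finset.sum_subset (Finset.subset_univ s) fun a _ ha => by simp [h a ha]]
  refine Finset.sum_le_sum fun a _ => ?_
  split_ifs
  exacts [le_rfl, hW a]

theorem weightedHamming_of_eq_off [Fintype α] [DecidableEq β] (hv : X v ≠ Y v)
    (hXY : ∀ w, w ≠ v → X w = Y w) :
    weightedHamming W X Y = W v := by
  rw [weightedHamming, Finset.sum_eq_single v (fun w _ hwv => by simp [hXY w hwv]) (by simp),
    if_pos hv]

theorem hamming_change_nonpos [Fintype α] [DecidableEq α] [DecidableEq β] (hW : ∀ a, 0 ≤ W a)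
    (hv : X v ≠ Y v) (hXY : ∀ w, w ≠ v → X w = Y w) {u : α} {c : β}
    (hfree : (∀ w, H.Adj u w → X w ≠ c) ↔ (∀ w, H.Adj u w → Y w ≠ c)) :
    weightedHamming W (glauberUpdate H X u c) (glauberUpdate H Y u c) -
      weightedHamming W X Y ≤ 0 := by
  have hle := weightedHamming_le_of_eq_off hW (s := {v}) fun w hw =>
    glauberUpdate_eq_off hXY hfree w (Finset.notMem_singleton.1 hw)
  rw [Finset.sum_singleton] at hle
  rw [weightedHamming_of_eq_off hv hXY]
  linarith

theorem card_sub_ncard_neighborSet_le_card_free [Finite α] [Fintype β] (σ : α → β) (u : α) :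
    (Fintype.card β : ℝ) - (H.neighborSet u).ncard ≤
      (Finset.univ.filter fun c => ∀ w, H.Adj u w → σ w ≠ c).card := by
  have hsplit := Finset.card_filter_add_card_filter_not (s := Finset.univ)
    fun c => ∀ w, H.Adj u w → σ w ≠ c
  have hblocked : (Finset.univ.filter fun c => ¬ ∀ w, H.Adj u w → σ w ≠ c).card ≤
      (H.neighborSet u).ncard := by
    have himage : ((Finset.univ.filter fun c => ¬ ∀ w, H.Adj u w → σ w ≠ c : Finset β) : Set β) =
        σ '' H.neighborSet u := by
      ext c
      simp [and_comm]
    rw [← Set.ncard_coe_finset, himage]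
    exact Set.ncard_image_le
  rw [Finset.card_univ] at hsplit
  rw [← hsplit]
  push_cast
  linarith [(Nat.cast_le (α := ℝ)).2 hblocked]

theorem sum_hamming_change_self_le [Fintype α] [DecidableEq α] [Fintype β] [DecidableEq β]
    (hW : ∀ a, 0 ≤ W a) (hv : X v ≠ Y v)
    (hXY : ∀ w, w ≠ v → X w = Y w) :
    ∑ c, (weightedHamming W (glauberUpdate H X v c) (glauberUpdate H Y v c) -
        weightedHamming W X Y) ≤
      -W v * (Fintype.card β - (H.neighborSet v).ncard) := by
  have hterm : ∀ c, weightedHamming W (glauberUpdate H X v c) (glauberUpdate H Y v c) -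
      weightedHamming W X Y = if ∀ w, H.Adj v w → X w ≠ c then -W v else 0 := by
    intro c
    have hfree := free_iff_of_eq_off hXY (H := H) (c := c) fun h => absurd h (H.irrefl)
    by_cases hc : ∀ w, H.Adj v w → X w ≠ c
    · have hagree : Function.update X v c = Function.update Y v c := by
        funext w
        rcases eq_or_ne w v with rfl | hwv
        · simp
        · simp [Function.update_of_ne hwv, hXY w hwv]
      rw [glauberUpdate, glauberUpdate, if_pos hc, if_pos (hfree.1 hc), hagree, if_pos hc,
        weightedHamming_of_eq_off hv hXY]
      simp [weightedHamming]
    · simp [glauberUpdate, hc, mt hfree.2 hc]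
  have hcount : (Fintype.card β : ℝ) - (H.neighborSet v).ncard ≤
      (Finset.univ.filter fun c => ∀ w, H.Adj v w → X w ≠ c).card := by
    convert card_sub_ncard_neighborSet_le_card_free (H := H) X v
  rw [Finset.sum_congr rfl fun c _ => hterm c, Finset.sum_ite, Finset.sum_const_zero, add_zero,
    Finset.sum_const, nsmul_eq_mul, mul_comm]
  exact mul_le_mul_of_nonpos_left hcount (neg_nonpos.2 (hW v))

theorem sum_hamming_change_neighbor_le [Fintype α] [DecidableEq α] [Fintype β] [DecidableEq β]
    (hW : ∀ a, 0 ≤ W a) (hv : X v ≠ Y v)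
    (hXY : ∀ w, w ≠ v → X w = Y w) {u : α} (hadj : H.Adj v u) :
    ∑ c, (weightedHamming W (glauberUpdate H X u c)
        (glauberUpdate H Y u (Equiv.swap (X v) (Y v) c)) - weightedHamming W X Y) ≤ W u := by
  have hterm : ∀ c, weightedHamming W (glauberUpdate H X u c)
      (glauberUpdate H Y u (Equiv.swap (X v) (Y v) c)) - weightedHamming W X Y ≤
        if c = Y v then W u else 0 := by
    intro c
    rcases eq_or_ne c (Y v) with rfl | hcY
    · rw [Equiv.swap_apply_right, if_pos rfl, weightedHamming_of_eq_off hv hXY]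
      have hle := weightedHamming_le_of_eq_off hW (s := {v, u})
        (σ := glauberUpdate H X u (Y v)) (τ := glauberUpdate H Y u (X v)) fun w hw => by
          simp only [Finset.mem_insert, Finset.mem_singleton, not_or] at hw
          rw [glauberUpdate_apply_of_ne _ _ hw.2, glauberUpdate_apply_of_ne _ _ hw.2, hXY w hw.1]
      rw [Finset.sum_pair hadj.ne] at hle
      linarith
    rw [if_neg hcY]
    rcases eq_or_ne c (X v) with rfl | hcX
    · rw [Equiv.swap_apply_left, glauberUpdate_of_adj hadj.symm, glauberUpdate_of_adj hadj.symm,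
        sub_self]
    · rw [Equiv.swap_apply_of_ne_of_ne hcX hcY]
      exact hamming_change_nonpos hW hv hXY
        (free_iff_of_eq_off hXY fun _ => ⟨hcX.symm, hcY.symm⟩)
  calc _ ≤ ∑ c, if c = Y v then W u else 0 := Finset.sum_le_sum fun c _ => hterm c
    _ = W u := by simp

variable (H X Y v) in
noncomputable def neighborSwap [DecidableEq β] (u : α) : Equiv.Perm β :=
  if H.Adj v u then Equiv.swap (X v) (Y v) else Equiv.refl β

theorem sum_hamming_change_le [Fintype α] [DecidableEq α] [Fintype β] [DecidableEq β]
    (hW : ∀ a, 0 ≤ W a) (hv : X v ≠ Y v)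
    (hXY : ∀ w, w ≠ v → X w = Y w) :
    ∑ u, ∑ c, (weightedHamming W (glauberUpdate H X u c)
        (glauberUpdate H Y u (neighborSwap H X Y v u c)) - weightedHamming W X Y) ≤
      -W v * (Fintype.card β - (H.neighborSet v).ncard) +
        ∑ u ∈ Finset.univ.filter (H.Adj v ·), W u := by
  have hvertex : ∀ u, ∑ c, (weightedHamming W (glauberUpdate H X u c)
      (glauberUpdate H Y u (neighborSwap H X Y v u c)) - weightedHamming W X Y) ≤
        (if u = v then -W v * (Fintype.card β - (H.neighborSet v).ncard) else 0) +
          if H.Adj v u then W u else 0 := by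
    intro u
    rcases eq_or_ne u v with rfl | huv
    · simpa [neighborSwap] using sum_hamming_change_self_le hW hv hXY
    by_cases hadj : H.Adj v u
    · simpa [neighborSwap, hadj, huv] using sum_hamming_change_neighbor_le hW hv hXY hadj
    · simp only [neighborSwap, if_neg hadj, if_neg huv, Equiv.refl_apply, add_zero]
      exact Finset.sum_nonpos fun c _ => hamming_change_nonpos hW hv hXY
        (free_iff_of_eq_off hXY fun h => absurd h.symm hadj)
  calc _ ≤ _ := Finset.sum_le_sum fun u _ => hvertex u
    _ = _ := by rw [Finset.sum_add_distrib, Finset.sum_ite_eq', Finset.sum_filter]; simp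

end Glauber

theorem glauberP_eq_uniformLaw {V : Type} [Fintype V] (G₁ G₂ : SimpleGraph V) (k : ℕ)
    (σ : HatVertex G₁ G₂ → Fin k) :
    glauberP G₁ G₂ k σ =
      uniformLaw fun p : HatVertex G₁ G₂ × Fin k => glauberStep G₁ G₂ σ p.1 p.2 := by
  funext τ
  simp only [glauberP, uniformLaw, Fintype.sum_prod_type, Fintype.card_prod, Fintype.card_fin,
    Nat.cast_mul]

-- Phrased with `glauberStep`, not `glauberUpdate`: under the main theorem's `[DecidableEq V]` the
-- latter would pick up a different `DecidableEq (HatVertex G₁ G₂)` instance.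
theorem sum_hatH_change_le {V : Type} [Fintype V] {G₁ G₂ : SimpleGraph V} {k : ℕ}
    {X Y : HatVertex G₁ G₂ → Fin k} {v : HatVertex G₁ G₂}
    (hv : X v ≠ Y v) (hXY : ∀ w, w ≠ v → X w = Y w) :
    ∑ u, ∑ c, (hatH G₁ G₂ (glauberStep G₁ G₂ X u c)
        (glauberStep G₁ G₂ Y u (neighborSwap (hatG G₁ G₂) X Y v u c)) - hatH G₁ G₂ X Y) ≤
      -(hatWeight G₁ G₂ v : ℝ) * (k - ((hatG G₁ G₂).neighborSet v).ncard) +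
        ∑ w ∈ Finset.univ.filter ((hatG G₁ G₂).Adj v ·), (hatWeight G₁ G₂ w : ℝ) := by
  have h := sum_hamming_change_le (H := hatG G₁ G₂) (W := fun w => (hatWeight G₁ G₂ w : ℝ))
    (fun _ => Nat.cast_nonneg _) hv hXY
  rw [Fintype.card_fin] at h
  exact h

theorem glauber_coupling_one_step_bound_general {V : Type} [Fintype V] [DecidableEq V]
    (G₁ G₂ : SimpleGraph V) (k : ℕ)
    (X Y : HatVertex G₁ G₂ → Fin k) (v : HatVertex G₁ G₂)
    (hv : X v ≠ Y v) (hXY : ∀ w, w ≠ v → X w = Y w) :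
    ∃ γ : ((HatVertex G₁ G₂ → Fin k) × (HatVertex G₁ G₂ → Fin k)) → ℝ,
      IsCoupling γ (glauberP G₁ G₂ k X) (glauberP G₁ G₂ k Y) ∧
      ∑ q : (HatVertex G₁ G₂ → Fin k) × (HatVertex G₁ G₂ → Fin k),
          γ q * (hatH G₁ G₂ q.1 q.2 - hatH G₁ G₂ X Y) ≤
        (1 / ((Fintype.card (HatVertex G₁ G₂) : ℝ) * (k : ℝ))) *
          (-(hatWeight G₁ G₂ v : ℝ) *
              ((k : ℝ) - (((hatG G₁ G₂).neighborSet v).ncard : ℝ)) +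
            ∑ w ∈ Finset.univ.filter (fun w => (hatG G₁ G₂).Adj v w),
              (hatWeight G₁ G₂ w : ℝ)) := by
  let e := Equiv.prodCongrRight (neighborSwap (hatG G₁ G₂) X Y v)
  let update (σ : HatVertex G₁ G₂ → Fin k) (p : HatVertex G₁ G₂ × Fin k) :=
    glauberStep G₁ G₂ σ p.1 p.2
  refine ⟨uniformLaw fun p => (update X p, update Y (e p)), ?_, ?_⟩
  · have hY : glauberP G₁ G₂ k Y = uniformLaw (update Y ∘ e) := by
      rw [uniformLaw_comp_equiv]
      exact glauberP_eq_uniformLaw G₁ G₂ k Y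
    rw [glauberP_eq_uniformLaw, hY]
    exact isCoupling_uniformLaw _ _
  · rw [sum_uniformLaw_mul, Fintype.card_prod, Fintype.card_fin, Nat.cast_mul, one_div_mul_eq_div,
      Fintype.sum_prod_type]
    gcongr
    exact sum_hatH_change_le hv hXY

/-- For colorings `X, Y` differing at exactly one vertex `v*`, there is a
coupling of the one-step Glauber transition distributions from `X` and `Y` under which
`E[Ĥ(X′,Y′) − Ĥ(X,Y)] ≤ (1/(mk))·(−W(v*)(k − d_Ĝ(v*)) + Σ_{w ∈ N(v*)} W(w))`. -/
theorem glauber_coupling_one_step_bound {V : Type} [Fintype V] [DecidableEq V]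
    (G₁ G₂ : SimpleGraph V) (Δ k : ℕ) (hk : 0 < k)
    (h₁ : ∀ v : V, (G₁.neighborSet v).ncard ≤ Δ)
    (h₂ : ∀ v : V, (G₂.neighborSet v).ncard ≤ Δ)
    (X Y : HatVertex G₁ G₂ → Fin k) (v : HatVertex G₁ G₂)
    (hv : X v ≠ Y v) (hXY : ∀ w, w ≠ v → X w = Y w) :
    ∃ γ : ((HatVertex G₁ G₂ → Fin k) × (HatVertex G₁ G₂ → Fin k)) → ℝ,
      IsCoupling γ (glauberP G₁ G₂ k X) (glauberP G₁ G₂ k Y) ∧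
      ∑ q : (HatVertex G₁ G₂ → Fin k) × (HatVertex G₁ G₂ → Fin k),
          γ q * (hatH G₁ G₂ q.1 q.2 - hatH G₁ G₂ X Y) ≤
        (1 / ((Fintype.card (HatVertex G₁ G₂) : ℝ) * (k : ℝ))) *
          (-(hatWeight G₁ G₂ v : ℝ) *
              ((k : ℝ) - (((hatG G₁ G₂).neighborSet v).ncard : ℝ)) +
            ∑ w ∈ Finset.univ.filter (fun w => (hatG G₁ G₂).Adj v w),
              (hatWeight G₁ G₂ w : ℝ)) :=
  glauber_coupling_one_step_bound_general G₁ G₂ k X Y v hv hXY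
end
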